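/- arXiv:0905.2215 — 2 statements merged into one kernel-verified Lean document; each statement's English description precedes it below -/
import Mathlib

section
/- In the Drinfeld double D(B) of the Taft algebra B (generated by E, k; with F, κ generating B*), the cross-relations kκ = κk, kFk⁻¹ = q⁻¹F, κEκ⁻¹ = q⁻¹E, and [E,F] = (k² − κ²)/(q − q⁻¹) hold, where E, k abbreviate ε⊗E, ε⊗k and F, κ abbreviate F⊗1, κ⊗1. -/
/-!
Let `G = κ * κ` be the convolution square of `κ`. On the monomial basis `E^m k^n` one checks
that `κ`, hence `G`, is a character of `B` (`κ(E) = G(E) = 0`, `κ(k) = q^{-1/2}`, `G(k) = q⁻¹`)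
and that `F` is an `(ε, G)`-twisted derivation, `F(xy) = F(x) G(y) + ε(x) F(y)`.
In the double, multiplying `ν ⊗ 1` on the left by the grouplike `k` or by the
`(1, k²)`-skew-primitive `E` only translates `ν` by `k^{±1}`, `k⁻²`, `S⁻¹(E) = -k⁻²E` and `E`.
The character and twisted-derivation rules evaluate these translates of `κ` and `F`,
which gives the four relations.
-/

open TensorProduct

noncomputable section

variable {T : Type*} [Ring T] [Algebra ℂ T]

/-- Convolution product on `B*` dual to the comultiplication `Δ`. -/
def dualMulT (Δ : T →ₐ[ℂ] T ⊗[ℂ] T) (α β : Module.Dual ℂ T) : Module.Dual ℂ T :=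
  (TensorProduct.lift ((LinearMap.mul ℂ ℂ).compl₁₂ α β)).comp Δ.toLinearMap

section QCommute

variable {R A : Type*} [CommSemiring R] [Semiring A] [Algebra R A] {q : R} {E K : A}

theorem pow_mul_eq_smul_mul_pow (h : K * E = q • (E * K)) (a : ℕ) :
    K ^ a * E = q ^ a • (E * K ^ a) := by
  induction a with
  | zero => simp
  | succ n ih =>
    rw [pow_succ, mul_assoc, h, mul_smul_comm, ← mul_assoc, ih, smul_mul_assoc, smul_smul,
      mul_assoc, ← pow_succ, ← pow_succ']

theorem pow_mul_pow_eq_smul_mul_pow (h : K * E = q • (E * K)) (a b : ℕ) :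
    K ^ a * E ^ b = q ^ (a * b) • (E ^ b * K ^ a) := by
  induction b with
  | zero => simp
  | succ n ih =>
    rw [pow_succ, ← mul_assoc, ih, smul_mul_assoc, mul_assoc, pow_mul_eq_smul_mul_pow h,
      mul_smul_comm, smul_smul, ← mul_assoc, ← pow_succ, ← pow_add, mul_add_one]

theorem monomial_mul_monomial (h : K * E = q • (E * K)) (a b c d : ℕ) :
    E ^ a * K ^ b * (E ^ c * K ^ d) = q ^ (b * c) • (E ^ (a + c) * K ^ (b + d)) := by
  rw [mul_assoc, ← mul_assoc (K ^ b), pow_mul_pow_eq_smul_mul_pow h, smul_mul_assoc,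
    mul_smul_comm, pow_add, pow_add, mul_assoc, mul_assoc]

end QCommute

section MonomialBasis

variable {R A : Type*} [CommRing R] [Ring A] [Algebra R A] {E K : A} {p N : ℕ}
  {bas : Module.Basis (Fin p × ZMod N) R A}

theorem linearMap_ext_of_monomial {M : Type*} [AddCommMonoid M] [Module R M]
    (hbas : ∀ mn : Fin p × ZMod N, bas mn = E ^ (mn.1 : ℕ) * K ^ mn.2.val) {f g : A →ₗ[R] M}
    (h : ∀ a b : ℕ, f (E ^ a * K ^ b) = g (E ^ a * K ^ b)) : f = g :=
  bas.ext fun mn => by rw [hbas]; exact h _ _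

theorem linearMap₂_ext_of_monomial {M : Type*} [AddCommMonoid M] [Module R M]
    (hbas : ∀ mn : Fin p × ZMod N, bas mn = E ^ (mn.1 : ℕ) * K ^ mn.2.val)
    {f g : A →ₗ[R] A →ₗ[R] M}
    (h : ∀ a b c d : ℕ, f (E ^ a * K ^ b) (E ^ c * K ^ d) = g (E ^ a * K ^ b) (E ^ c * K ^ d)) :
    f = g :=
  linearMap_ext_of_monomial hbas fun a b => linearMap_ext_of_monomial hbas (h a b)

theorem algHom_ext_of_monomial {B : Type*} [Semiring B] [Algebra R B]
    (hbas : ∀ mn : Fin p × ZMod N, bas mn = E ^ (mn.1 : ℕ) * K ^ mn.2.val) {φ ψ : A →ₐ[R] B}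
    (hE : φ E = ψ E) (hK : φ K = ψ K) : φ = ψ :=
  AlgHom.toLinearMap_injective <| linearMap_ext_of_monomial hbas fun a b => by simp [hE, hK]

theorem apply_monomial_of_apply_basis {M : Type*} [AddCommMonoid M] [Module R M]
    (hEnil : E ^ p = 0) (hKord : K ^ N = 1)
    (hbas : ∀ mn : Fin p × ZMod N, bas mn = E ^ (mn.1 : ℕ) * K ^ mn.2.val)
    {f : A →ₗ[R] M} {j : ℕ} (hj : j < p) {g : ℕ → M} (hg : ∀ b, g (b % N) = g b)
    (hf : ∀ mn : Fin p × ZMod N, f (bas mn) = if (mn.1 : ℕ) = j then g mn.2.val else 0)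
    (a b : ℕ) : f (E ^ a * K ^ b) = if a = j then g b else 0 := by
  rcases lt_or_ge a p with ha | ha
  · have h := hf (⟨a, ha⟩, b)
    rwa [hbas, ZMod.val_natCast, ← pow_eq_pow_mod b hKord, hg] at h
  · rw [pow_eq_zero_of_le ha hEnil, zero_mul, map_zero, if_neg (by omega)]

end MonomialBasis

theorem map_pow_mul_pow_of_map_eq_zero {R A B : Type*} [CommSemiring R] [Semiring A]
    [Semiring B] [Algebra R A] [Algebra R B] (χ : A →ₐ[R] B) {E K : A} (hE : χ E = 0)
    (a b : ℕ) : χ (E ^ a * K ^ b) = if a = 0 then χ K ^ b else 0 := by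
  rcases Nat.eq_zero_or_pos a with rfl | ha
  · simp
  · simp [hE, ha.ne']

section Convolution

variable (Δ : T →ₐ[ℂ] T ⊗[ℂ] T)

theorem dualMulT_algHom (χ₁ χ₂ : T →ₐ[ℂ] ℂ) :
    dualMulT Δ χ₁.toLinearMap χ₂.toLinearMap =
      ((Algebra.TensorProduct.lmul' ℂ).comp
        ((Algebra.TensorProduct.map χ₁ χ₂).comp Δ)).toLinearMap := by
  have hlift : TensorProduct.lift ((LinearMap.mul ℂ ℂ).compl₁₂ χ₁.toLinearMap χ₂.toLinearMap) =
      ((Algebra.TensorProduct.lmul' ℂ).comp (Algebra.TensorProduct.map χ₁ χ₂)).toLinearMap :=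
    TensorProduct.ext' fun a b => by simp
  rw [dualMulT, hlift]
  rfl

variable {Δ}

theorem dualMulT_counit_left {ε : T →ₐ[ℂ] ℂ}
    (hε : (Algebra.TensorProduct.lid ℂ T).toAlgHom.comp
      ((Algebra.TensorProduct.map ε (AlgHom.id ℂ T)).comp Δ) = AlgHom.id ℂ T)
    (α : Module.Dual ℂ T) : dualMulT Δ ε.toLinearMap α = α := by
  have hlift : TensorProduct.lift ((LinearMap.mul ℂ ℂ).compl₁₂ ε.toLinearMap α) =
      α ∘ₗ ((Algebra.TensorProduct.lid ℂ T).toAlgHom.comp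
        (Algebra.TensorProduct.map ε (AlgHom.id ℂ T))).toLinearMap :=
    TensorProduct.ext' fun a b => by simp
  ext x
  rw [dualMulT, LinearMap.comp_apply, hlift]
  exact congrArg α (AlgHom.congr_fun hε x)

theorem dualMulT_counit_right {ε : T →ₐ[ℂ] ℂ}
    (hε : (Algebra.TensorProduct.rid ℂ ℂ T).toAlgHom.comp
      ((Algebra.TensorProduct.map (AlgHom.id ℂ T) ε).comp Δ) = AlgHom.id ℂ T)
    (α : Module.Dual ℂ T) : dualMulT Δ α ε.toLinearMap = α := by
  have hlift : TensorProduct.lift ((LinearMap.mul ℂ ℂ).compl₁₂ α ε.toLinearMap) =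
      α ∘ₗ ((Algebra.TensorProduct.rid ℂ ℂ T).toAlgHom.comp
        (Algebra.TensorProduct.map (AlgHom.id ℂ T) ε)).toLinearMap :=
    TensorProduct.ext' fun a b => by simp [mul_comm]
  ext x
  rw [dualMulT, LinearMap.comp_apply, hlift]
  exact congrArg α (AlgHom.congr_fun hε x)

end Convolution

def IsTwistedDerivation (ε G : T →ₐ[ℂ] ℂ) (F : Module.Dual ℂ T) : Prop :=
  ∀ x y : T, F (x * y) = F x * G y + ε x * F y

section TaftDual

variable {E K : T} {p N : ℕ} {bas : Module.Basis (Fin p × ZMod N) ℂ T}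

theorem map_mul_of_apply_monomial
    (hbas : ∀ mn : Fin p × ZMod N, bas mn = E ^ (mn.1 : ℕ) * K ^ mn.2.val) {q r : ℂ}
    (hcomm : K * E = q • (E * K)) {κ : Module.Dual ℂ T}
    (hκ : ∀ a b : ℕ, κ (E ^ a * K ^ b) = if a = 0 then r ^ (-(b : ℤ)) else 0) (x y : T) :
    κ (x * y) = κ x * κ y := by
  suffices (LinearMap.mul ℂ T).compr₂ κ = (LinearMap.mul ℂ ℂ).compl₁₂ κ κ from
    LinearMap.congr_fun₂ this x y
  refine linearMap₂_ext_of_monomial hbas fun a b c d => ?_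
  simp only [LinearMap.compr₂_apply, LinearMap.mul_apply', LinearMap.compl₁₂_apply,
    monomial_mul_monomial hcomm, map_smul, hκ, smul_eq_mul, zpow_neg, zpow_natCast]
  rcases Nat.eq_zero_or_pos a with rfl | ha
  · rcases Nat.eq_zero_or_pos c with rfl | hc
    · simp [pow_add, mul_comm]
    · simp [hc.ne']
  · simp [ha.ne']

theorem isTwistedDerivation_of_apply_monomial
    (hbas : ∀ mn : Fin p × ZMod N, bas mn = E ^ (mn.1 : ℕ) * K ^ mn.2.val) {q w : ℂ}
    (hq : q ≠ 0) (hcomm : K * E = q • (E * K)) {F : Module.Dual ℂ T}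
    (hF : ∀ a b : ℕ, F (E ^ a * K ^ b) = if a = 1 then q ^ (-(b : ℤ)) / w else 0)
    {ε G : T →ₐ[ℂ] ℂ} (hεE : ε E = 0) (hεK : ε K = 1) (hGE : G E = 0)
    (hGK : G K = q⁻¹) : IsTwistedDerivation ε G F := by
  intro x y
  suffices (LinearMap.mul ℂ T).compr₂ F = (LinearMap.mul ℂ ℂ).compl₁₂ F G.toLinearMap +
      (LinearMap.mul ℂ ℂ).compl₁₂ ε.toLinearMap F from
    LinearMap.congr_fun₂ this x y
  refine linearMap₂_ext_of_monomial hbas fun a b c d => ?_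
  simp only [LinearMap.compr₂_apply, LinearMap.mul_apply', LinearMap.add_apply,
    LinearMap.compl₁₂_apply, AlgHom.toLinearMap_apply, monomial_mul_monomial hcomm, map_smul,
    hF, smul_eq_mul, zpow_neg, zpow_natCast, map_pow_mul_pow_of_map_eq_zero _ hεE,
    map_pow_mul_pow_of_map_eq_zero _ hGE, hεK, hGK]
  rcases Nat.lt_or_ge (a + c) 2 with hac | hac
  · obtain ⟨rfl, rfl⟩ | ⟨rfl, rfl⟩ | ⟨rfl, rfl⟩ :
        a = 0 ∧ c = 0 ∨ a = 1 ∧ c = 0 ∨ a = 0 ∧ c = 1 := by omega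
    · simp
    · simp only [mul_zero, pow_zero, add_zero, ↓reduceIte, pow_add, mul_inv_rev, one_mul,
        inv_pow, one_ne_zero, zero_ne_one]
      ring
    · simp only [mul_one, zero_add, ↓reduceIte, pow_add, mul_inv_rev, zero_ne_one, one_ne_zero,
        mul_zero, one_pow, one_mul]
      field_simp
  · split_ifs <;> first | omega | simp

end TaftDual

/-- `ν ∘ₗ mulLeft (Sinv m₃) ∘ₗ mulRight m₁` is the functional `m₁ ⇀ ν ↼ S⁻¹(m₃)`. -/
def IsDrinfeldDoubleMul (Δ : T →ₐ[ℂ] T ⊗[ℂ] T) (Sinv : T →ₗ[ℂ] T)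
    (mulD : (Module.Dual ℂ T ⊗[ℂ] T) →ₗ[ℂ] (Module.Dual ℂ T ⊗[ℂ] T) →ₗ[ℂ]
      (Module.Dual ℂ T ⊗[ℂ] T)) : Prop :=
  ∀ (μ ν : Module.Dual ℂ T) (m n : T) (M : ℕ) (m1 m2 m3 : Fin M → T),
    (TensorProduct.map Δ.toLinearMap LinearMap.id) (Δ m) = ∑ j, (m1 j ⊗ₜ[ℂ] m2 j) ⊗ₜ[ℂ] m3 j →
    mulD (μ ⊗ₜ[ℂ] m) (ν ⊗ₜ[ℂ] n) = ∑ j, (dualMulT Δ μ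
      (ν ∘ₗ (LinearMap.mulLeft ℂ (Sinv (m3 j))) ∘ₗ (LinearMap.mulRight ℂ (m1 j)))) ⊗ₜ[ℂ] (m2 j * n)

namespace IsDrinfeldDoubleMul

variable {Δ : T →ₐ[ℂ] T ⊗[ℂ] T} {Sinv : T →ₗ[ℂ] T}
  {mulD : (Module.Dual ℂ T ⊗[ℂ] T) →ₗ[ℂ] (Module.Dual ℂ T ⊗[ℂ] T) →ₗ[ℂ]
    (Module.Dual ℂ T ⊗[ℂ] T)}
  {ε : T →ₐ[ℂ] ℂ} {g : T}

theorem tmul_grouplike_mul (hD : IsDrinfeldDoubleMul Δ Sinv mulD)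
    (hg : Δ g = g ⊗ₜ g) (μ ν : Module.Dual ℂ T) (n : T) :
    mulD (μ ⊗ₜ g) (ν ⊗ₜ n) =
      dualMulT Δ μ (ν ∘ₗ LinearMap.mulLeft ℂ (Sinv g) ∘ₗ LinearMap.mulRight ℂ g) ⊗ₜ (g * n) := by
  have hΔ2 : TensorProduct.map Δ.toLinearMap LinearMap.id (Δ g) =
      ∑ _j : Fin 1, (g ⊗ₜ[ℂ] g) ⊗ₜ[ℂ] g := by simp [hg]
  simpa using hD μ ν g n 1 _ _ _ hΔ2

theorem tmul_skewPrimitive_mul (hD : IsDrinfeldDoubleMul Δ Sinv mulD) {x : T}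
    (hx : Δ x = 1 ⊗ₜ x + x ⊗ₜ g) (μ ν : Module.Dual ℂ T) (n : T) :
    mulD (μ ⊗ₜ x) (ν ⊗ₜ n) =
      dualMulT Δ μ (ν ∘ₗ LinearMap.mulLeft ℂ (Sinv x)) ⊗ₜ n +
      dualMulT Δ μ (ν ∘ₗ LinearMap.mulLeft ℂ (Sinv g)) ⊗ₜ (x * n) +
      dualMulT Δ μ (ν ∘ₗ LinearMap.mulLeft ℂ (Sinv g) ∘ₗ LinearMap.mulRight ℂ x) ⊗ₜ (g * n) := by
  have hΔ2 : TensorProduct.map Δ.toLinearMap LinearMap.id (Δ x) =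
      ∑ j : Fin 3, (![1, 1, x] j ⊗ₜ[ℂ] ![1, x, g] j) ⊗ₜ[ℂ] ![x, g, g] j := by
    simp [Fin.sum_univ_three, hx, Algebra.TensorProduct.one_def, add_tmul, add_assoc]
  simpa [Fin.sum_univ_three] using hD μ ν x n 3 _ _ _ hΔ2

theorem tmul_one_mul (hD : IsDrinfeldDoubleMul Δ Sinv mulD) (hS1 : Sinv 1 = 1)
    (μ ν : Module.Dual ℂ T) (n : T) :
    mulD (μ ⊗ₜ 1) (ν ⊗ₜ n) = dualMulT Δ μ ν ⊗ₜ n := by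
  simpa [hS1] using hD.tmul_grouplike_mul (map_one Δ) μ ν n

theorem grouplike_commute_character (hD : IsDrinfeldDoubleMul Δ Sinv mulD) (hS1 : Sinv 1 = 1)
    (hεl : ∀ α, dualMulT Δ ε.toLinearMap α = α) (hεr : ∀ α, dualMulT Δ α ε.toLinearMap = α)
    (hg : Δ g = g ⊗ₜ g) (hSg : Sinv g * g = 1) (χ : T →ₐ[ℂ] ℂ) :
    mulD (ε.toLinearMap ⊗ₜ g) (χ.toLinearMap ⊗ₜ 1) =
      mulD (χ.toLinearMap ⊗ₜ 1) (ε.toLinearMap ⊗ₜ g) := by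
  rw [hD.tmul_grouplike_mul hg, hD.tmul_one_mul hS1, hεl, hεr, mul_one]
  congr 1
  ext x
  simp only [LinearMap.comp_apply, LinearMap.mulLeft_apply, LinearMap.mulRight_apply,
    AlgHom.toLinearMap_apply]
  rw [map_mul, map_mul, mul_left_comm, ← map_mul, hSg, map_one, mul_one]

theorem grouplike_mul_twistedDerivation (hD : IsDrinfeldDoubleMul Δ Sinv mulD)
    (hS1 : Sinv 1 = 1) (hεl : ∀ α, dualMulT Δ ε.toLinearMap α = α)
    (hεr : ∀ α, dualMulT Δ α ε.toLinearMap = α) (hg : Δ g = g ⊗ₜ g) {G : T →ₐ[ℂ] ℂ}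
    {F : Module.Dual ℂ T} (hF : IsTwistedDerivation ε G F) (hFg : F g = 0)
    (hFSg : F (Sinv g) = 0) (hεSg : ε (Sinv g) = 1) :
    mulD (ε.toLinearMap ⊗ₜ g) (F ⊗ₜ 1) = G g • mulD (F ⊗ₜ 1) (ε.toLinearMap ⊗ₜ g) := by
  rw [hD.tmul_grouplike_mul hg, hD.tmul_one_mul hS1, hεl, hεr, mul_one, smul_tmul']
  congr 1
  ext x
  simp only [LinearMap.comp_apply, LinearMap.mulLeft_apply, LinearMap.mulRight_apply,
    LinearMap.smul_apply, smul_eq_mul, hF _ _, hFg, hFSg, hεSg]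
  ring

theorem skewPrimitive_mul_character (hD : IsDrinfeldDoubleMul Δ Sinv mulD)
    (hS1 : Sinv 1 = 1) (hεl : ∀ α, dualMulT Δ ε.toLinearMap α = α)
    (hεr : ∀ α, dualMulT Δ α ε.toLinearMap = α) {x : T} (hx : Δ x = 1 ⊗ₜ x + x ⊗ₜ g)
    (hSx : Sinv x = -(Sinv g * x)) {χ : T →ₐ[ℂ] ℂ} (hχx : χ x = 0) :
    mulD (ε.toLinearMap ⊗ₜ x) (χ.toLinearMap ⊗ₜ 1) =
      χ (Sinv g) • mulD (χ.toLinearMap ⊗ₜ 1) (ε.toLinearMap ⊗ₜ x) := by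
  have h₁ : χ.toLinearMap ∘ₗ LinearMap.mulLeft ℂ (Sinv x) = 0 := by
    ext y; simp [hSx, hχx]
  have h₂ : χ.toLinearMap ∘ₗ LinearMap.mulLeft ℂ (Sinv g) = χ (Sinv g) • χ.toLinearMap := by
    ext y; simp
  have h₃ : χ.toLinearMap ∘ₗ LinearMap.mulLeft ℂ (Sinv g) ∘ₗ LinearMap.mulRight ℂ x = 0 := by
    ext y; simp [hχx]
  simp only [hD.tmul_skewPrimitive_mul hx, hD.tmul_one_mul hS1, h₁, h₂, h₃, hεl, hεr,
    zero_tmul, mul_one, zero_add, add_zero, smul_tmul']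

theorem skewPrimitive_commutator_twistedDerivation (hD : IsDrinfeldDoubleMul Δ Sinv mulD)
    (hS1 : Sinv 1 = 1) (hεl : ∀ α, dualMulT Δ ε.toLinearMap α = α)
    (hεr : ∀ α, dualMulT Δ α ε.toLinearMap = α) {x : T} (hx : Δ x = 1 ⊗ₜ x + x ⊗ₜ g)
    (hSx : Sinv x = -(Sinv g * x)) (hεx : ε x = 0) (hεSg : ε (Sinv g) = 1) {G : T →ₐ[ℂ] ℂ}
    {F : Module.Dual ℂ T} (hF : IsTwistedDerivation ε G F) (hGx : G x = 0)
    (hFSg : F (Sinv g) = 0) :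
    mulD (ε.toLinearMap ⊗ₜ x) (F ⊗ₜ 1) - mulD (F ⊗ₜ 1) (ε.toLinearMap ⊗ₜ x) =
      F x • (ε.toLinearMap ⊗ₜ g - G.toLinearMap ⊗ₜ 1) := by
  have h₁ : F ∘ₗ LinearMap.mulLeft ℂ (Sinv x) = -(F x • G.toLinearMap) := by
    ext y; simp [hSx, hF _ _, hεx, hFSg, hεSg]
  have h₂ : F ∘ₗ LinearMap.mulLeft ℂ (Sinv g) = F := by
    ext y; simp [hF _ _, hFSg, hεSg]
  have h₃ : F ∘ₗ LinearMap.mulLeft ℂ (Sinv g) ∘ₗ LinearMap.mulRight ℂ x =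
      F x • ε.toLinearMap := by
    ext y; simp [hF _ _, hGx, hεSg, mul_comm]
  simp only [hD.tmul_skewPrimitive_mul hx, hD.tmul_one_mul hS1, h₁, h₂, h₃, hεl, hεr,
    mul_one, smul_sub, smul_tmul', neg_tmul]
  abel

end IsDrinfeldDoubleMul

theorem antipode_inv_apply_generators {S Sinv : T →ₗ[ℂ] T}
    (hSanti : ∀ x y : T, S (x * y) = S y * S x) (hS1 : S 1 = 1)
    (hSinv : ∀ x : T, Sinv (S x) = x) {E K Kinv L : T} (hKinvK : Kinv * K = 1)
    (hKKinv : K * Kinv = 1) (hSK : S K = Kinv) (hSE : S E = -(E * L)) (hL : L * (K * K) = 1) :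
    Sinv 1 = 1 ∧ Sinv K = Kinv ∧ Sinv (K * K) = Kinv * Kinv ∧ Sinv E = -(Kinv * Kinv * E) := by
  have hSinv' : ∀ {x y : T}, S x = y → Sinv y = x := fun h => h ▸ hSinv _
  have hSKinv : S Kinv = K := by
    have h : S Kinv * Kinv = 1 := by rw [← hS1, ← hKKinv, hSanti, hSK]
    rw [← one_mul K, ← h, mul_assoc, hKinvK, mul_one]
  have hSKinv2 : S (Kinv * Kinv) = K * K := by rw [hSanti, hSKinv]
  refine ⟨hSinv' hS1, hSinv' hSKinv, hSinv' hSKinv2, hSinv' ?_⟩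
  rw [map_neg, hSanti, hSE, hSKinv2, neg_mul, mul_assoc, hL, mul_one, neg_neg]

theorem cexp_pi_mul_I_div_pow_four_mul {p : ℕ} (hp : p ≠ 0) :
    Complex.exp (Real.pi * Complex.I / p) ^ (4 * p) = 1 := by
  rw [← Complex.exp_nat_mul, ← Complex.exp_nat_mul_two_pi_mul_I 2]
  congr 1
  push_cast
  field_simp
  ring

theorem cexp_pi_mul_I_div_two_mul_pow_four_mul {p : ℕ} (hp : p ≠ 0) :
    Complex.exp (Real.pi * Complex.I / (2 * p)) ^ (4 * p) = 1 := by
  rw [← Complex.exp_nat_mul, ← Complex.exp_two_pi_mul_I]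
  congr 1
  push_cast
  field_simp
  ring

theorem cexp_pi_mul_I_div_two_mul_sq (p : ℕ) :
    Complex.exp (Real.pi * Complex.I / (2 * p)) ^ 2 = Complex.exp (Real.pi * Complex.I / p) := by
  rw [← Complex.exp_nat_mul]
  congr 1
  push_cast
  ring

theorem zpow_neg_natCast_mod {M : Type*} [DivisionMonoid M] {z : M} {N : ℕ} (hz : z ^ N = 1)
    (b : ℕ) : z ^ (-((b % N : ℕ) : ℤ)) = z ^ (-(b : ℤ)) := by
  rw [zpow_neg, zpow_neg, zpow_natCast, zpow_natCast, ← pow_eq_pow_mod b hz]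

theorem drinfeld_double_taft_cross_relations
    (p : ℕ) (hp : 2 ≤ p)
    (q q2 : ℂ)
    (hq : q = Complex.exp (Real.pi * Complex.I / p))
    (hq2 : q2 = Complex.exp (Real.pi * Complex.I / (2 * p)))
    (E K : T)
    (hcomm : K * E = q • (E * K)) (hEnil : E ^ p = 0) (hKord : K ^ (4 * p) = 1)
    (bas : Module.Basis (Fin p × ZMod (4 * p)) ℂ T)
    (hbas : ∀ mn : Fin p × ZMod (4 * p), bas mn = E ^ (mn.1 : ℕ) * K ^ mn.2.val)
    (Δ : T →ₐ[ℂ] T ⊗[ℂ] T)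
    (hΔE : Δ E = 1 ⊗ₜ[ℂ] E + E ⊗ₜ[ℂ] (K * K)) (hΔK : Δ K = K ⊗ₜ[ℂ] K)
    (εa : T →ₐ[ℂ] ℂ) (hεE : εa E = 0) (hεK : εa K = 1)
    -- the antipode and its inverse
    (S : T →ₗ[ℂ] T) (hSanti : ∀ x y : T, S (x * y) = S y * S x) (hS1 : S 1 = 1)
    (hSE : S E = -(E * K ^ (4 * p - 2))) (hSK : S K = K ^ (4 * p - 1))
    (Sinv : T →ₗ[ℂ] T) (hSinv : ∀ x : T, S (Sinv x) = x ∧ Sinv (S x) = x)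
    -- the dual generators
    (F κ : Module.Dual ℂ T)
    (hF : ∀ mn : Fin p × ZMod (4 * p),
      F (bas mn) = if (mn.1 : ℕ) = 1 then q ^ (-(mn.2.val : ℤ)) / (q - q⁻¹) else 0)
    (hκ : ∀ mn : Fin p × ZMod (4 * p),
      κ (bas mn) = if (mn.1 : ℕ) = 0 then q2 ^ (-(mn.2.val : ℤ)) else 0)
    -- the Drinfeld double multiplication
    (mulD : (Module.Dual ℂ T ⊗[ℂ] T) →ₗ[ℂ] (Module.Dual ℂ T ⊗[ℂ] T) →ₗ[ℂ]
        (Module.Dual ℂ T ⊗[ℂ] T))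
    (mulD_def : ∀ (μ ν : Module.Dual ℂ T) (m n : T)
        (M : ℕ) (m1 m2 m3 : Fin M → T)
        (_ : (TensorProduct.map Δ.toLinearMap LinearMap.id) (Δ m)
              = ∑ j, (m1 j ⊗ₜ[ℂ] m2 j) ⊗ₜ[ℂ] m3 j),
        mulD (μ ⊗ₜ[ℂ] m) (ν ⊗ₜ[ℂ] n)
          = ∑ j, (dualMulT Δ μ
              (ν ∘ₗ (LinearMap.mulLeft ℂ (Sinv (m3 j))) ∘ₗ (LinearMap.mulRight ℂ (m1 j))))
              ⊗ₜ[ℂ] (m2 j * n)) :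
    -- the cross-relations (ε ≔ εa.toLinearMap is the unit of B*)
    (mulD (εa.toLinearMap ⊗ₜ[ℂ] K) (κ ⊗ₜ[ℂ] (1 : T))
        = mulD (κ ⊗ₜ[ℂ] (1 : T)) (εa.toLinearMap ⊗ₜ[ℂ] K)) ∧
    (mulD (εa.toLinearMap ⊗ₜ[ℂ] K) (F ⊗ₜ[ℂ] (1 : T))
        = q⁻¹ • mulD (F ⊗ₜ[ℂ] (1 : T)) (εa.toLinearMap ⊗ₜ[ℂ] K)) ∧
    (mulD (κ ⊗ₜ[ℂ] (1 : T)) (εa.toLinearMap ⊗ₜ[ℂ] E)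
        = q⁻¹ • mulD (εa.toLinearMap ⊗ₜ[ℂ] E) (κ ⊗ₜ[ℂ] (1 : T))) ∧
    (mulD (εa.toLinearMap ⊗ₜ[ℂ] E) (F ⊗ₜ[ℂ] (1 : T))
        - mulD (F ⊗ₜ[ℂ] (1 : T)) (εa.toLinearMap ⊗ₜ[ℂ] E)
      = (q - q⁻¹)⁻¹ •
          ((εa.toLinearMap ⊗ₜ[ℂ] (K * K)) - (dualMulT Δ κ κ ⊗ₜ[ℂ] (1 : T)))) := by
  have hq0 : q ≠ 0 := hq ▸ Complex.exp_ne_zero _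
  have hq2sq : q2 ^ 2 = q := hq ▸ hq2 ▸ cexp_pi_mul_I_div_two_mul_sq p
  have hq4p : q ^ (4 * p) = 1 := hq ▸ cexp_pi_mul_I_div_pow_four_mul (by omega)
  have hq24p : q2 ^ (4 * p) = 1 := hq2 ▸ cexp_pi_mul_I_div_two_mul_pow_four_mul (by omega)
  have valκ := apply_monomial_of_apply_basis hEnil hKord hbas (g := fun b => q2 ^ (-(b : ℤ)))
    (by omega) (zpow_neg_natCast_mod hq24p) hκ
  have valF := apply_monomial_of_apply_basis hEnil hKord hbas
    (g := fun b => q ^ (-(b : ℤ)) / (q - q⁻¹)) (by omega)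
    (fun b => by simp only [zpow_neg_natCast_mod hq4p]) hF
  obtain ⟨χ, rfl⟩ : ∃ χ : T →ₐ[ℂ] ℂ, χ.toLinearMap = κ := ⟨AlgHom.ofLinearMap κ
    (by simpa using valκ 0 0) (map_mul_of_apply_monomial hbas hcomm valκ), rfl⟩
  have hχE : χ E = 0 := by simpa using valκ 1 0
  have hχK : χ K = q2⁻¹ := by simpa using valκ 0 1
  set G := (Algebra.TensorProduct.lmul' ℂ).comp ((Algebra.TensorProduct.map χ χ).comp Δ)
  have hGE : G E = 0 := by simp [G, hΔE, hχE]
  have hGK : G K = q⁻¹ := by simp [G, hΔK, hχK, ← hq2sq, sq]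
  have hFder : IsTwistedDerivation εa G F :=
    isTwistedDerivation_of_apply_monomial hbas hq0 hcomm valF hεE hεK hGE hGK
  have hFE : F E = (q - q⁻¹)⁻¹ := by simpa using valF 1 0
  have hεl := dualMulT_counit_left (Δ := Δ) (ε := εa)
    (algHom_ext_of_monomial hbas (by simp [hΔE, hεE]) (by simp [hΔK, hεK]))
  have hεr := dualMulT_counit_right (Δ := Δ) (ε := εa)
    (algHom_ext_of_monomial hbas (by simp [hΔE, hεE, hεK]) (by simp [hΔK, hεK]))
  set Kinv := K ^ (4 * p - 1)
  have hKinvK : Kinv * K = 1 := by rw [← pow_succ, Nat.sub_add_cancel (by omega), hKord]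
  have hKKinv : K * Kinv = 1 := by rw [← pow_succ', Nat.sub_add_cancel (by omega), hKord]
  obtain ⟨hS1', hSK', hSKK', hSE'⟩ := antipode_inv_apply_generators hSanti hS1
    (fun x => (hSinv x).2) hKinvK hKKinv hSK hSE
    (by rw [← mul_assoc, ← pow_succ, ← pow_succ, show 4 * p - 2 + 1 + 1 = 4 * p by omega, hKord])
  have hχKinv : χ Kinv = q2 := by
    rw [← inv_inv q2, ← hχK]
    exact eq_inv_of_mul_eq_one_left (by rw [← map_mul, hKinvK, map_one])
  have hεKinv : εa Kinv = 1 := by rw [map_pow, hεK, one_pow]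
  have hFKinv : F Kinv = 0 := by simpa using valF 0 (4 * p - 1)
  have hD : IsDrinfeldDoubleMul Δ Sinv mulD := mulD_def
  refine ⟨hD.grouplike_commute_character hS1' hεl hεr hΔK (by rw [hSK', hKinvK]) χ, ?_, ?_, ?_⟩
  · rw [hD.grouplike_mul_twistedDerivation hS1' hεl hεr hΔK hFder (by simpa using valF 0 1)
      (by rw [hSK', hFKinv]) (by rw [hSK', hεKinv]), hGK]
  · rw [hD.skewPrimitive_mul_character hS1' hεl hεr hΔE (by rw [hSE', hSKK']) hχE, smul_smul,
      hSKK', map_mul, hχKinv, ← sq, hq2sq, inv_mul_cancel₀ hq0, one_smul]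
  · rw [dualMulT_algHom, hD.skewPrimitive_commutator_twistedDerivation hS1' hεl hεr hΔE
      (by rw [hSE', hSKK']) hεE (by rw [hSKK', map_mul, hεKinv, one_mul]) hFder hGE
      (by rw [hSKK', hFder, hFKinv]; simp), hFE]
end
end

section
/- Let q = exp(iπ/p) and let ℂ_q[z,∂] be the U_q sl(2)-module algebra with E ▷ z^m = −q^m[m]z^{m+1}, F ▷ z^m = [m]q^{1−m}z^{m−1}, E ▷ ∂^n = q^{1−n}[n]∂^{n−1}, F ▷ ∂^n = −q^n[n]∂^{n+1}, K ▷ z^m∂^n = q^{2(m−n)}z^m∂^n. Then the element w = Σ_{i=1}^{p−1} (1/[i]_q) z^i ∂^i satisfies E ▷ w = c₁ z and F ▷ w = c₂ ∂ for nonzero constants c₁, c₂; in particular w generates a 2p-dimensional indecomposable submodule (the projective cover P₁⁺ of the trivial module) containing 1, z, …, z^{p−1}, ∂, …, ∂^{p−1}. -/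
noncomputable section

/-- The q-integer `[n]_q`. -/
def qint (q : ℂ) (n : ℕ) : ℂ := (q ^ n - q⁻¹ ^ n) / (q - q⁻¹)

/-- Relations of `ℂ_q[z,∂]`: `z = X 0`, `∂ = X 1`. -/
inductive cqRel (p : ℕ) (q : ℂ) : FreeAlgebra ℂ (Fin 2) → FreeAlgebra ℂ (Fin 2) → Prop
  | znil : cqRel p q ((FreeAlgebra.ι ℂ (0 : Fin 2)) ^ p) 0
  | dnil : cqRel p q ((FreeAlgebra.ι ℂ (1 : Fin 2)) ^ p) 0
  | dz : cqRel p q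
      (FreeAlgebra.ι ℂ (1 : Fin 2) * FreeAlgebra.ι ℂ (0 : Fin 2))
      ((q - q⁻¹) • (1 : FreeAlgebra ℂ (Fin 2)) +
        ((q ^ 2)⁻¹) • (FreeAlgebra.ι ℂ (0 : Fin 2) * FreeAlgebra.ι ℂ (1 : Fin 2)))

/-- The algebra `ℂ_q[z,∂]`. -/
def CqAlg (p : ℕ) (q : ℂ) : Type := RingQuot (cqRel p q)

instance (p : ℕ) (q : ℂ) : Ring (CqAlg p q) := inferInstanceAs (Ring (RingQuot (cqRel p q)))
instance (p : ℕ) (q : ℂ) : Algebra ℂ (CqAlg p q) :=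
  inferInstanceAs (Algebra ℂ (RingQuot (cqRel p q)))

def Zg (p : ℕ) (q : ℂ) : CqAlg p q :=
  RingQuot.mkAlgHom ℂ (cqRel p q) (FreeAlgebra.ι ℂ (0 : Fin 2))

def Dg (p : ℕ) (q : ℂ) : CqAlg p q :=
  RingQuot.mkAlgHom ℂ (cqRel p q) (FreeAlgebra.ι ℂ (1 : Fin 2))

/-!
By the Leibniz rule, `[i]⁻¹ E ▷ (z^i ∂^i)` is a difference `f i - f (i + 1)`, so `E ▷ w`
telescopes to `z` (the last term contains `z^p = 0`); likewise `F ▷ w = ∂`. From `z` and `∂`,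
repeated `E` and `F` reach every `z^a` and `∂^b` with nonzero multiples of `[a]`, and `F ▷ z = 1`,
so every submodule containing `w` contains `W = span {w, z^a, ∂^b}`, which is itself stable.
The representation of `ℂ_q[z,∂]` on `ℂ[z]/(z^p)` by `p × p` matrices shows that the `z^a`, `∂^b`
are independent and that `w` is not in their span `R`, so `dim W = 2p`.

For indecomposability, `∑_{k<p} K^k` maps `R` into `ℂ 1` and `w` to `p w`. A stable subspace not
contained in `R` therefore contains some `c w + β 1` with `c ≠ 0`; applying `E` gives `z`, hence
`1`, hence `w`, so it is all of `W`. Of two stable complements in `W` one is not contained in `R`,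
so the other is zero.
-/

open Finset

theorem Fin.sum_ite_val_eq {M : Type*} [AddCommMonoid M] {n : ℕ} (m : ℕ) (g : Fin n → M) :
    ∑ k : Fin n, (if (k : ℕ) = m then g k else 0) = if h : m < n then g ⟨m, h⟩ else 0 := by
  split_ifs with h
  · rw [Fintype.sum_eq_single ⟨m, h⟩ fun k hk => if_neg fun e => hk (Fin.ext e), if_pos rfl]
  · exact Fintype.sum_eq_zero _ fun k => if_neg (by omega)

theorem Fin.sum_ite_eq_val_add {M : Type*} [AddCommMonoid M] {n : ℕ} (i : Fin n) (a : ℕ)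
    (g : Fin n → M) :
    ∑ k : Fin n, (if (i : ℕ) = k + a then g k else 0) =
      if h : a ≤ i then g ⟨i - a, by omega⟩ else 0 := by
  split_ifs with h
  · rw [Fintype.sum_eq_single ⟨i - a, by omega⟩
      fun k hk => if_neg fun e => hk (by ext; dsimp only; omega), if_pos (by dsimp only; omega)]
  · exact Fintype.sum_eq_zero _ fun k => if_neg (by omega)

theorem Finset.sum_Icc_sub_succ {M : Type*} [AddCommGroup M] (f : ℕ → M) {m n : ℕ} (hmn : m ≤ n) :
    ∑ i ∈ Icc m n, (f i - f (i + 1)) = f m - f (n + 1) := by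
  rw [← neg_sub (f (n + 1)), ← Finset.sum_Icc_sub hmn, ← sum_neg_distrib]
  simp only [neg_sub]

theorem linearIndependent_of_apply_eq_zero_of_ne {ι K M : Type*} [Field K] [AddCommGroup M]
    [Module K M] {v : ι → M} (ℓ : ι → M →ₗ[K] K) (hdiag : ∀ i, ℓ i (v i) ≠ 0)
    (hoff : ∀ i j, i ≠ j → ℓ i (v j) = 0) : LinearIndependent K v := by
  classical
  rw [linearIndependent_iff']
  intro s c hs i hi
  have := congr_arg (ℓ i) hs
  rw [map_sum, Finset.sum_eq_single i
    (fun j _ hji => by rw [map_smul, hoff i j hji.symm, smul_zero]) (fun h => (h hi).elim),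
    map_smul, map_zero, smul_eq_mul] at this
  exact (mul_eq_zero.1 this).resolve_right (hdiag i)

theorem IsPrimitiveRoot.geom_sum_zpow_eq_zero {K : Type*} [Field K] {ζ : K} {n : ℕ}
    (hζ : IsPrimitiveRoot ζ n) {l : ℤ} (hl : ¬ (n : ℤ) ∣ l) :
    ∑ k ∈ range n, (ζ ^ l) ^ k = 0 := by
  have hne : ζ ^ l ≠ 1 := fun h => hl ((hζ.zpow_eq_one_iff_dvd l).1 h)
  have hn : (ζ ^ l) ^ n = 1 := by
    rw [← zpow_natCast, ← zpow_mul, mul_comm, zpow_mul, zpow_natCast, hζ.pow_eq_one, one_zpow]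
  exact (mul_eq_zero.1 ((geom_sum_mul _ n).trans (by rw [hn, sub_self]))).resolve_right
    (sub_ne_zero.2 hne)

theorem Module.End.sum_pow_apply_of_apply_eq_smul {R M : Type*} [CommSemiring R]
    [AddCommMonoid M] [Module R M] {f : Module.End R M} {x : M} {μ : R} (hx : f x = μ • x)
    (s : Finset ℕ) : (∑ k ∈ s, f ^ k) x = (∑ k ∈ s, μ ^ k) • x := by
  have hpow (k : ℕ) : (f ^ k) x = μ ^ k • x := by
    induction k with
    | zero => simp
    | succ k ih => rw [pow_succ', Module.End.mul_apply, ih, map_smul, hx, smul_smul, pow_succ]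
  rw [LinearMap.sum_apply, Finset.sum_smul]
  exact Finset.sum_congr rfl fun k _ => hpow k

theorem Submodule.mem_of_apply_eq_smul_succ {K M : Type*} [DivisionRing K] [AddCommGroup M]
    [Module K M] {W : Submodule K M} {T : M →ₗ[K] M} (hT : ∀ x ∈ W, T x ∈ W) {x : ℕ → M}
    {c : ℕ → K} (hx : ∀ n, T (x n) = c n • x (n + 1)) {m N : ℕ}
    (hc : ∀ n, m ≤ n → n < N → c n ≠ 0) (hm : x m ∈ W) : ∀ n, m ≤ n → n ≤ N → x n ∈ W := by
  intro n hmn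
  induction n, hmn using Nat.le_induction with
  | base => exact fun _ => hm
  | succ n hmn ih =>
    exact fun hnN => (W.smul_mem_iff (hc n hmn (by omega))).1 (hx n ▸ hT _ (ih (by omega)))

def IsUqSubmodule {R M : Type*} [Semiring R] [AddCommMonoid M] [Module R M]
    (E F K K' : M →ₗ[R] M) (W : Submodule R M) : Prop :=
  ∀ x ∈ W, E x ∈ W ∧ F x ∈ W ∧ K x ∈ W ∧ K' x ∈ W

theorem isUqSubmodule_span {R M : Type*} [Semiring R] [AddCommMonoid M] [Module R M]
    {E F K K' : M →ₗ[R] M} {s : Set M}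
    (hs : ∀ x ∈ s, E x ∈ Submodule.span R s ∧ F x ∈ Submodule.span R s ∧
      K x ∈ Submodule.span R s ∧ K' x ∈ Submodule.span R s) :
    IsUqSubmodule E F K K' (Submodule.span R s) := by
  have key (T : M →ₗ[R] M) (hT : ∀ x ∈ s, T x ∈ Submodule.span R s) :
      ∀ x ∈ Submodule.span R s, T x ∈ Submodule.span R s :=
    fun x hx => (Submodule.span_le (p := (Submodule.span R s).comap T)).2 hT hx
  exact fun x hx => ⟨key E (fun y hy => (hs y hy).1) x hx, key F (fun y hy => (hs y hy).2.1) x hx,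
    key K (fun y hy => (hs y hy).2.2.1) x hx, key K' (fun y hy => (hs y hy).2.2.2) x hx⟩

theorem isPrimitiveRoot_sq_exp_pi_mul_I_div {p : ℕ} (hp : p ≠ 0) :
    IsPrimitiveRoot (Complex.exp (Real.pi * Complex.I / p) ^ 2) p := by
  rw [← Complex.exp_nat_mul]
  convert Complex.isPrimitiveRoot_exp p hp using 2
  push_cast
  ring

theorem qint_zero (q : ℂ) : qint q 0 = 0 := by simp [qint]

section QInt

variable {p : ℕ} {q : ℂ}

theorem ne_zero_of_isPrimitiveRoot_sq (hq : IsPrimitiveRoot (q ^ 2) p) (hp : 0 < p) : q ≠ 0 :=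
  fun h => hq.ne_zero hp.ne' (by simp [h])

theorem qint_ne_zero (hq : IsPrimitiveRoot (q ^ 2) p) {k : ℕ} (hk : 0 < k) (hkp : k < p) :
    qint q k ≠ 0 := by
  have hq0 := ne_zero_of_isPrimitiveRoot_sq hq (by omega)
  have hnum : ∀ j, 0 < j → j < p → q ^ j - q⁻¹ ^ j ≠ 0 := fun j hj hjp h => by
    refine hq.pow_ne_one_of_pos_of_lt hj.ne' hjp ?_
    rw [← pow_mul, mul_comm, pow_mul, sq]
    nth_rewrite 2 [sub_eq_zero.1 h]
    rw [← mul_pow, mul_inv_cancel₀ hq0, one_pow]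
  exact div_ne_zero (hnum k hk hkp) (by simpa using hnum 1 one_pos (by omega))

end QInt

/-- `∂ z^m = dCoeff q m • z^(m-1)` in `ℂ[z]/(z^p)`, where `∂` acts on `1` by `0`. -/
def dCoeff (q : ℂ) (m : ℕ) : ℂ := q * (1 - ((q ^ 2) ^ m)⁻¹)

theorem dCoeff_zero (q : ℂ) : dCoeff q 0 = 0 := by simp [dCoeff]

theorem dCoeff_succ {q : ℂ} (hq0 : q ≠ 0) (m : ℕ) :
    dCoeff q (m + 1) = (q - q⁻¹) + (q ^ 2)⁻¹ * dCoeff q m := by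
  simp only [dCoeff, pow_succ]
  field_simp
  ring

theorem dCoeff_eq_zero_iff {q : ℂ} (hq0 : q ≠ 0) {m : ℕ} : dCoeff q m = 0 ↔ (q ^ 2) ^ m = 1 := by
  rw [dCoeff, mul_eq_zero, or_iff_right hq0, sub_eq_zero, eq_comm, inv_eq_one]

theorem dCoeff_ne_zero {p : ℕ} {q : ℂ} (hq : IsPrimitiveRoot (q ^ 2) p) {m : ℕ} (hm : 0 < m)
    (hmp : m < p) : dCoeff q m ≠ 0 := by
  rw [Ne, dCoeff_eq_zero_iff (ne_zero_of_isPrimitiveRoot_sq hq (by omega))]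
  exact hq.pow_ne_one_of_pos_of_lt hm.ne' hmp

section MatrixModel

variable (p : ℕ) (q : ℂ)

/- Multiplication by `z` and the `q`-derivative `∂` on `ℂ[z]/(z^p)`, in the basis
`1, z, …, z^(p-1)`. -/
def zMat : Matrix (Fin p) (Fin p) ℂ := Matrix.of fun i j => if (i : ℕ) = j + 1 then 1 else 0

def dMat : Matrix (Fin p) (Fin p) ℂ :=
  Matrix.of fun i j => if (j : ℕ) = i + 1 then dCoeff q j else 0

theorem zMat_pow_apply (a : ℕ) (i j : Fin p) :
    (zMat p ^ a) i j = if (i : ℕ) = j + a then 1 else 0 := by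
  induction a generalizing i j with
  | zero => simp [Matrix.one_apply, Fin.ext_iff]
  | succ a ih =>
    simp only [pow_succ, Matrix.mul_apply, ih]
    simp only [zMat, Matrix.of_apply, mul_ite, mul_one, mul_zero, Fin.sum_ite_val_eq]
    have := i.isLt
    split_ifs <;> first | rfl | omega

theorem dMat_pow_apply (b : ℕ) (i j : Fin p) :
    (dMat p q ^ b) i j =
      if (j : ℕ) = i + b then ∏ t ∈ range b, dCoeff q (i + 1 + t) else 0 := by
  induction b generalizing i j with
  | zero => simp [Matrix.one_apply, Fin.ext_iff, eq_comm]
  | succ b ih =>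
    simp only [pow_succ', Matrix.mul_apply, ih]
    simp only [dMat, Matrix.of_apply, ite_mul, zero_mul, Fin.sum_ite_val_eq, prod_range_succ']
    have := j.isLt
    split_ifs <;> first | (exfalso; omega) | ring_nf

theorem zMat_pow_mul_apply (a : ℕ) (M : Matrix (Fin p) (Fin p) ℂ) (i j : Fin p) :
    (zMat p ^ a * M) i j = if h : a ≤ i then M ⟨i - a, by omega⟩ j else 0 := by
  simp only [Matrix.mul_apply, zMat_pow_apply, ite_mul, one_mul, zero_mul,
    Fin.sum_ite_eq_val_add]

theorem zMat_mul_dMat : zMat p * dMat p q = Matrix.diagonal fun i : Fin p => dCoeff q i := by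
  ext i j
  rw [← pow_one (zMat p), zMat_pow_mul_apply, Matrix.diagonal_apply]
  simp only [dMat, Matrix.of_apply, Fin.ext_iff]
  split_ifs <;> first | (exfalso; omega) | rfl | skip
  · congr 1
    omega
  · rw [show (i : ℕ) = 0 by omega, dCoeff_zero]

theorem zMat_pow_self : zMat p ^ p = 0 := by
  ext i j
  rw [zMat_pow_apply, if_neg (by omega), Matrix.zero_apply]

theorem dMat_pow_self : dMat p q ^ p = 0 := by
  ext i j
  rw [dMat_pow_apply, if_neg (by omega), Matrix.zero_apply]

variable {q}

theorem dMat_mul_zMat (hdp : dCoeff q p = 0) :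
    dMat p q * zMat p = Matrix.diagonal fun i : Fin p => dCoeff q (i + 1) := by
  ext i j
  simp only [Matrix.mul_apply, dMat, zMat, Matrix.of_apply, mul_ite, mul_one, mul_zero,
    Fin.sum_ite_val_eq, Matrix.diagonal_apply, Fin.ext_iff, add_left_inj]
  have := i.isLt
  split_ifs <;> first | (exfalso; omega) | rfl | (congr 1; omega) | skip
  rw [show (i : ℕ) + 1 = p by omega, hdp]

theorem dMat_mul_zMat_eq (hq0 : q ≠ 0) (hqp : (q ^ 2) ^ p = 1) :
    dMat p q * zMat p = (q - q⁻¹) • 1 + (q ^ 2)⁻¹ • (zMat p * dMat p q) := by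
  rw [dMat_mul_zMat p ((dCoeff_eq_zero_iff hq0).2 hqp), zMat_mul_dMat, ← Matrix.diagonal_one,
    ← Matrix.diagonal_smul, ← Matrix.diagonal_smul, Matrix.diagonal_add]
  simp [dCoeff_succ hq0]

def cqToMatrix (hq0 : q ≠ 0) (hqp : (q ^ 2) ^ p = 1) :
    CqAlg p q →ₐ[ℂ] Matrix (Fin p) (Fin p) ℂ :=
  RingQuot.liftAlgHom ℂ ⟨FreeAlgebra.lift ℂ ![zMat p, dMat p q], by
    rintro _ _ ⟨⟩ <;> simp [zMat_pow_self, dMat_pow_self, dMat_mul_zMat_eq p hq0 hqp]⟩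

theorem cqToMatrix_Zg (hq0 : q ≠ 0) (hqp : (q ^ 2) ^ p = 1) :
    cqToMatrix p hq0 hqp (Zg p q) = zMat p := by
  refine (RingQuot.liftAlgHom_mkAlgHom_apply _ _ _ _).trans ?_
  simp

theorem cqToMatrix_Dg (hq0 : q ≠ 0) (hqp : (q ^ 2) ^ p = 1) :
    cqToMatrix p hq0 hqp (Dg p q) = dMat p q := by
  refine (RingQuot.liftAlgHom_mkAlgHom_apply _ _ _ _).trans ?_
  simp

end MatrixModel

theorem Zg_pow_self (p : ℕ) (q : ℂ) : Zg p q ^ p = 0 :=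
  (map_pow (RingQuot.mkAlgHom ℂ (cqRel p q)) _ p).symm.trans
    ((RingQuot.mkAlgHom_rel ℂ cqRel.znil).trans (map_zero _))

theorem Dg_pow_self (p : ℕ) (q : ℂ) : Dg p q ^ p = 0 :=
  (map_pow (RingQuot.mkAlgHom ℂ (cqRel p q)) _ p).symm.trans
    ((RingQuot.mkAlgHom_rel ℂ cqRel.dnil).trans (map_zero _))

section Cover

variable (p : ℕ) (q : ℂ)

def cqPowers : Fin p ⊕ Fin (p - 1) → CqAlg p q :=
  Sum.elim (fun a => Zg p q ^ (a : ℕ)) (fun b => Dg p q ^ ((b : ℕ) + 1))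

def cqW : CqAlg p q := ∑ i ∈ Icc 1 (p - 1), (qint q i)⁻¹ • (Zg p q ^ i * Dg p q ^ i)

def cqRadical : Submodule ℂ (CqAlg p q) := Submodule.span ℂ (Set.range (cqPowers p q))

def cqCover : Submodule ℂ (CqAlg p q) :=
  Submodule.span ℂ (insert (cqW p q) (Set.range (cqPowers p q)))

variable {p q}

theorem linearIndependent_cqPowers (hq : IsPrimitiveRoot (q ^ 2) p) (hp : 0 < p) :
    LinearIndependent ℂ (cqPowers p q) := by
  have hq0 := ne_zero_of_isPrimitiveRoot_sq hq hp
  set φ := (cqToMatrix p hq0 hq.pow_eq_one).toLinearMap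
  let o : Fin p := ⟨0, hp⟩
  refine linearIndependent_of_apply_eq_zero_of_ne
    (Sum.elim (fun a => Matrix.entryLinearMap ℂ ℂ a o ∘ₗ φ)
      (fun b => Matrix.entryLinearMap ℂ ℂ o ⟨b + 1, by omega⟩ ∘ₗ φ)) ?_ ?_
  · rintro (a | b)
    · simp [φ, o, cqPowers, cqToMatrix_Zg, zMat_pow_apply]
    · simpa [φ, o, cqPowers, cqToMatrix_Dg, dMat_pow_apply] using
        prod_ne_zero_iff.2 fun t ht => dCoeff_ne_zero hq (by omega) (by rw [mem_range] at ht; omega)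
  · rintro (a | b) (a' | b') hne <;>
      simp [φ, o, cqPowers, cqToMatrix_Zg, cqToMatrix_Dg, zMat_pow_apply, dMat_pow_apply,
        Fin.ext_iff] at hne ⊢ <;>
      omega

theorem cqW_notMem_cqRadical (hq : IsPrimitiveRoot (q ^ 2) p) (hp : 1 < p) :
    cqW p q ∉ cqRadical p q := by
  have hq0 := ne_zero_of_isPrimitiveRoot_sq hq (by omega)
  set φ := (cqToMatrix p hq0 hq.pow_eq_one).toLinearMap
  let o : Fin p := ⟨0, by omega⟩
  let l : Fin p := ⟨1, hp⟩
  -- the difference of the diagonal entries at `z` and at `1` kills every power of `z` and `∂`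
  let ℓ := (Matrix.entryLinearMap ℂ ℂ l l - Matrix.entryLinearMap ℂ ℂ o o) ∘ₗ φ
  have hR : cqRadical p q ≤ LinearMap.ker ℓ := by
    refine Submodule.span_le.2 (Set.range_subset_iff.2 ?_)
    rintro (a | b) <;>
      simp [ℓ, φ, o, l, cqPowers, cqToMatrix_Zg, cqToMatrix_Dg, zMat_pow_apply, dMat_pow_apply,
        @eq_comm ℕ 0]
  have hmonomial (i : ℕ) (hi : 1 ≤ i) :
      ℓ (Zg p q ^ i * Dg p q ^ i) = if i = 1 then dCoeff q 1 else 0 := by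
    obtain rfl | hi1 := eq_or_lt_of_le hi
    · simp [ℓ, φ, o, l, cqToMatrix_Zg, cqToMatrix_Dg, zMat_mul_dMat, dCoeff_zero]
    · simp [ℓ, φ, o, l, cqToMatrix_Zg, cqToMatrix_Dg, zMat_pow_mul_apply, hi1.ne',
        show ¬ i ≤ 1 by omega, show i ≠ 0 by omega]
  have hw : ℓ (cqW p q) = (qint q 1)⁻¹ * dCoeff q 1 := by
    simp only [cqW, map_sum, map_smul, smul_eq_mul]
    rw [Finset.sum_eq_single 1
      (fun i hi hi1 => by rw [hmonomial i (mem_Icc.1 hi).1, if_neg hi1, mul_zero])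
      (fun h => (h (mem_Icc.2 ⟨le_rfl, by omega⟩)).elim), hmonomial 1 le_rfl, if_pos rfl]
  intro h
  have h0 : ℓ (cqW p q) = 0 := hR h
  rw [hw] at h0
  exact mul_ne_zero (inv_ne_zero (qint_ne_zero hq one_pos hp)) (dCoeff_ne_zero hq one_pos hp) h0

theorem Zg_pow_mem_cqCover (a : ℕ) : Zg p q ^ a ∈ cqCover p q := by
  by_cases ha : a < p
  · exact Submodule.subset_span (Set.mem_insert_of_mem _ ⟨Sum.inl ⟨a, ha⟩, rfl⟩)
  · rw [← Nat.sub_add_cancel (not_lt.1 ha), pow_add, Zg_pow_self, mul_zero]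
    exact zero_mem _

theorem Dg_pow_mem_cqCover (b : ℕ) : Dg p q ^ b ∈ cqCover p q := by
  rcases b with _ | b
  · rw [pow_zero, ← pow_zero (Zg p q)]
    exact Zg_pow_mem_cqCover 0
  by_cases hb : b < p - 1
  · exact Submodule.subset_span (Set.mem_insert_of_mem _ ⟨Sum.inr ⟨b, hb⟩, rfl⟩)
  · rw [← Nat.sub_add_cancel (show p ≤ b + 1 by omega), pow_add, Dg_pow_self, mul_zero]
    exact zero_mem _

theorem cqW_mem_cqCover : cqW p q ∈ cqCover p q :=
  Submodule.subset_span (Set.mem_insert _ _)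

theorem finrank_cqCover (hq : IsPrimitiveRoot (q ^ 2) p) (hp : 1 < p) :
    Module.finrank ℂ (cqCover p q) = 2 * p := by
  have hli : LinearIndependent ℂ fun o : Option _ => o.elim (cqW p q) (cqPowers p q) :=
    linearIndependent_option.2
      ⟨linearIndependent_cqPowers hq (by omega), cqW_notMem_cqRadical hq hp⟩
  rw [cqCover, ← Option.range_elim, finrank_span_eq_card hli]
  simp only [Fintype.card_option, Fintype.card_sum, Fintype.card_fin]
  omega

end Cover

structure IsCqAction (p : ℕ) (q : ℂ) (E F K K' : CqAlg p q →ₗ[ℂ] CqAlg p q) : Prop where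
  E_Zg_pow : ∀ m : ℕ, E (Zg p q ^ m) = (-(q ^ m) * qint q m) • Zg p q ^ (m + 1)
  F_Zg_pow : ∀ m : ℕ, F (Zg p q ^ m) = (qint q m * q ^ ((1 : ℤ) - m)) • Zg p q ^ (m - 1)
  E_Dg_pow : ∀ n : ℕ, E (Dg p q ^ n) = (q ^ ((1 : ℤ) - n) * qint q n) • Dg p q ^ (n - 1)
  F_Dg_pow : ∀ n : ℕ, F (Dg p q ^ n) = (-(q ^ n) * qint q n) • Dg p q ^ (n + 1)
  K_monomial : ∀ m n : ℕ,
    K (Zg p q ^ m * Dg p q ^ n) = (q ^ (2 * ((m : ℤ) - n))) • (Zg p q ^ m * Dg p q ^ n)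
  K'_monomial : ∀ m n : ℕ,
    K' (Zg p q ^ m * Dg p q ^ n) = (q ^ (-2 * ((m : ℤ) - n))) • (Zg p q ^ m * Dg p q ^ n)
  E_mul : ∀ a b : CqAlg p q, E (a * b) = a * E b + E a * K b
  F_mul : ∀ a b : CqAlg p q, F (a * b) = K' a * F b + F a * b

namespace IsCqAction

variable {p : ℕ} {q : ℂ} {E F K K' : CqAlg p q →ₗ[ℂ] CqAlg p q}

theorem K_Zg_pow (h : IsCqAction p q E F K K') (a : ℕ) :
    K (Zg p q ^ a) = q ^ (2 * (a : ℤ)) • Zg p q ^ a := by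
  simpa using h.K_monomial a 0

theorem K_Dg_pow (h : IsCqAction p q E F K K') (b : ℕ) :
    K (Dg p q ^ b) = (q ^ (2 * (b : ℤ)))⁻¹ • Dg p q ^ b := by
  simpa using h.K_monomial 0 b

theorem K'_Zg_pow (h : IsCqAction p q E F K K') (a : ℕ) :
    K' (Zg p q ^ a) = (q ^ (2 * (a : ℤ)))⁻¹ • Zg p q ^ a := by
  simpa using h.K'_monomial a 0

theorem K'_Dg_pow (h : IsCqAction p q E F K K') (b : ℕ) :
    K' (Dg p q ^ b) = q ^ (2 * (b : ℤ)) • Dg p q ^ b := by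
  simpa using h.K'_monomial 0 b

theorem K_monomial_eq_sq_zpow (h : IsCqAction p q E F K K') (m n : ℕ) :
    K (Zg p q ^ m * Dg p q ^ n) = (q ^ 2) ^ ((m : ℤ) - n) • (Zg p q ^ m * Dg p q ^ n) := by
  rw [h.K_monomial, zpow_mul, zpow_ofNat]

theorem K_cqW (h : IsCqAction p q E F K K') : K (cqW p q) = cqW p q := by
  simp [cqW, h.K_monomial]

theorem K'_cqW (h : IsCqAction p q E F K K') : K' (cqW p q) = cqW p q := by
  simp [cqW, h.K'_monomial]

theorem E_one (h : IsCqAction p q E F K K') : E 1 = 0 := by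
  simpa [qint_zero] using h.E_Zg_pow 0

theorem F_Zg (h : IsCqAction p q E F K K') : F (Zg p q) = qint q 1 • 1 := by
  simpa using h.F_Zg_pow 1

theorem smul_E_monomial (h : IsCqAction p q E F K K') (hq : IsPrimitiveRoot (q ^ 2) p) {i : ℕ}
    (hi : 0 < i) (hip : i < p) :
    (qint q i)⁻¹ • E (Zg p q ^ i * Dg p q ^ i) =
      q ^ ((1 : ℤ) - i) • (Zg p q ^ i * Dg p q ^ (i - 1)) -
        q ^ ((1 : ℤ) - (i + 1 : ℕ)) • (Zg p q ^ (i + 1) * Dg p q ^ (i + 1 - 1)) := by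
  have hq0 := ne_zero_of_isPrimitiveRoot_sq hq (by omega)
  have hqi := qint_ne_zero hq hi hip
  rw [h.E_mul, h.E_Dg_pow, h.E_Zg_pow, h.K_Dg_pow, Nat.add_sub_cancel]
  simp only [mul_smul_comm, smul_mul_assoc, smul_add, smul_smul]
  match_scalars
  · field_simp
  · simp only [zpow_sub₀ hq0, zpow_add₀ hq0, zpow_natCast, zpow_one, zpow_mul]
    field_simp
    ring

theorem smul_F_monomial (h : IsCqAction p q E F K K') (hq : IsPrimitiveRoot (q ^ 2) p) {i : ℕ}
    (hi : 0 < i) (hip : i < p) :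
    (qint q i)⁻¹ • F (Zg p q ^ i * Dg p q ^ i) =
      q ^ ((1 : ℤ) - i) • (Zg p q ^ (i - 1) * Dg p q ^ i) -
        q ^ ((1 : ℤ) - (i + 1 : ℕ)) • (Zg p q ^ (i + 1 - 1) * Dg p q ^ (i + 1)) := by
  have hq0 := ne_zero_of_isPrimitiveRoot_sq hq (by omega)
  have hqi := qint_ne_zero hq hi hip
  rw [h.F_mul, h.F_Dg_pow, h.F_Zg_pow, h.K'_Zg_pow, Nat.add_sub_cancel]
  simp only [mul_smul_comm, smul_mul_assoc, smul_add, smul_smul]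
  match_scalars
  · simp only [zpow_sub₀ hq0, zpow_add₀ hq0, zpow_natCast, zpow_one, zpow_mul]
    field_simp
    ring
  · field_simp

theorem E_cqW (h : IsCqAction p q E F K K') (hq : IsPrimitiveRoot (q ^ 2) p) (hp : 1 < p) :
    E (cqW p q) = Zg p q := by
  let f (i : ℕ) : CqAlg p q := q ^ ((1 : ℤ) - i) • (Zg p q ^ i * Dg p q ^ (i - 1))
  calc E (cqW p q) = ∑ i ∈ Icc 1 (p - 1), (f i - f (i + 1)) := by
        rw [cqW, map_sum]
        refine sum_congr rfl fun i hi => ?_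
        rw [mem_Icc] at hi
        rw [map_smul, h.smul_E_monomial hq (by omega) (by omega)]
    _ = f 1 - f p := by rw [sum_Icc_sub_succ f (by omega), Nat.sub_add_cancel (by omega)]
    _ = Zg p q := by simp [f, Zg_pow_self]

theorem F_cqW (h : IsCqAction p q E F K K') (hq : IsPrimitiveRoot (q ^ 2) p) (hp : 1 < p) :
    F (cqW p q) = Dg p q := by
  let f (i : ℕ) : CqAlg p q := q ^ ((1 : ℤ) - i) • (Zg p q ^ (i - 1) * Dg p q ^ i)
  calc F (cqW p q) = ∑ i ∈ Icc 1 (p - 1), (f i - f (i + 1)) := by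
        rw [cqW, map_sum]
        refine sum_congr rfl fun i hi => ?_
        rw [mem_Icc] at hi
        rw [map_smul, h.smul_F_monomial hq (by omega) (by omega)]
    _ = f 1 - f p := by rw [sum_Icc_sub_succ f (by omega), Nat.sub_add_cancel (by omega)]
    _ = Dg p q := by simp [f, Dg_pow_self]

theorem isUqSubmodule_cqCover (h : IsCqAction p q E F K K') (hq : IsPrimitiveRoot (q ^ 2) p)
    (hp : 1 < p) : IsUqSubmodule E F K K' (cqCover p q) := by
  have hz (c : ℂ) (a : ℕ) : c • Zg p q ^ a ∈ cqCover p q :=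
    Submodule.smul_mem _ _ (Zg_pow_mem_cqCover a)
  have hd (c : ℂ) (b : ℕ) : c • Dg p q ^ b ∈ cqCover p q :=
    Submodule.smul_mem _ _ (Dg_pow_mem_cqCover b)
  refine isUqSubmodule_span ?_
  rintro x (rfl | ⟨a | b, rfl⟩)
  · rw [h.E_cqW hq hp, h.F_cqW hq hp, h.K_cqW, h.K'_cqW, ← pow_one (Zg p q), ← pow_one (Dg p q)]
    exact ⟨Zg_pow_mem_cqCover 1, Dg_pow_mem_cqCover 1, cqW_mem_cqCover, cqW_mem_cqCover⟩
  · simp only [cqPowers, Sum.elim_inl, h.E_Zg_pow, h.F_Zg_pow, h.K_Zg_pow, h.K'_Zg_pow]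
    exact ⟨hz _ _, hz _ _, hz _ _, hz _ _⟩
  · simp only [cqPowers, Sum.elim_inr, h.E_Dg_pow, h.F_Dg_pow, h.K_Dg_pow, h.K'_Dg_pow]
    exact ⟨hd _ _, hd _ _, hd _ _, hd _ _⟩

theorem one_mem_of_Zg_mem (h : IsCqAction p q E F K K') (hq : IsPrimitiveRoot (q ^ 2) p)
    (hp : 1 < p) {W : Submodule ℂ (CqAlg p q)} (hW : IsUqSubmodule E F K K' W)
    (hz : Zg p q ∈ W) : 1 ∈ W :=
  (W.smul_mem_iff (qint_ne_zero hq one_pos hp)).1 (h.F_Zg ▸ (hW _ hz).2.1)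

theorem cqCover_le (h : IsCqAction p q E F K K') (hq : IsPrimitiveRoot (q ^ 2) p) (hp : 1 < p)
    {W : Submodule ℂ (CqAlg p q)} (hW : IsUqSubmodule E F K K' W) (hw : cqW p q ∈ W) :
    cqCover p q ≤ W := by
  have hz : Zg p q ^ 1 ∈ W := (pow_one (Zg p q)).symm ▸ h.E_cqW hq hp ▸ (hW _ hw).1
  have hd : Dg p q ^ 1 ∈ W := (pow_one (Dg p q)).symm ▸ h.F_cqW hq hp ▸ (hW _ hw).2.1
  have hc (n : ℕ) (hn : 1 ≤ n) (hnp : n < p - 1) : -q ^ n * qint q n ≠ 0 :=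
    mul_ne_zero (neg_ne_zero.2 (pow_ne_zero _ (ne_zero_of_isPrimitiveRoot_sq hq (by omega))))
      (qint_ne_zero hq (by omega) (by omega))
  have hz_pow := Submodule.mem_of_apply_eq_smul_succ (fun x hx => (hW x hx).1) h.E_Zg_pow hc hz
  have hd_pow := Submodule.mem_of_apply_eq_smul_succ (fun x hx => (hW x hx).2.1) h.F_Dg_pow hc hd
  rw [cqCover, Submodule.span_le, Set.insert_subset_iff, Set.range_subset_iff]
  refine ⟨hw, ?_⟩
  rintro (⟨a, ha⟩ | ⟨b, hb⟩)
  · rcases Nat.eq_zero_or_pos a with rfl | ha0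
    · simpa [cqPowers] using h.one_mem_of_Zg_mem hq hp hW ((pow_one (Zg p q)) ▸ hz)
    · exact hz_pow a ha0 (by omega)
  · exact hd_pow (b + 1) (by omega) (by omega)

/- `∑_{k<p} K^k` is `p` times the projection onto the `K`-fixed vectors: it kills every
`z^a ∂^b` with `p ∤ a - b`. -/
theorem sum_pow_K_mem_span_one (h : IsCqAction p q E F K K') (hq : IsPrimitiveRoot (q ^ 2) p)
    {r : CqAlg p q} (hr : r ∈ cqRadical p q) : (∑ k ∈ range p, K ^ k) r ∈ ℂ ∙ (1 : CqAlg p q) := by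
  refine (Submodule.span_le (p := (ℂ ∙ (1 : CqAlg p q)).comap (∑ k ∈ range p, K ^ k))).2 ?_ hr
  have hzero (m n : ℕ) (hmn : ¬ (p : ℤ) ∣ (m : ℤ) - n) :
      (∑ k ∈ range p, K ^ k) (Zg p q ^ m * Dg p q ^ n) = 0 := by
    rw [Module.End.sum_pow_apply_of_apply_eq_smul (h.K_monomial_eq_sq_zpow m n),
      hq.geom_sum_zpow_eq_zero hmn, zero_smul]
  rintro _ ⟨⟨a, ha⟩ | ⟨b, hb⟩, rfl⟩
  · rcases Nat.eq_zero_or_pos a with rfl | ha0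
    · have := Module.End.sum_pow_apply_of_apply_eq_smul (h.K_monomial_eq_sq_zpow 0 0) (range p)
      simp only [pow_zero, mul_one] at this
      simp only [cqPowers, Sum.elim_inl, pow_zero, SetLike.mem_coe, Submodule.mem_comap, this]
      exact Submodule.smul_mem _ _ (Submodule.mem_span_singleton_self (1 : CqAlg p q))
    · have := hzero a 0
        (by simpa using Int.natCast_dvd_natCast.not.2 (Nat.not_dvd_of_pos_of_lt ha0 ha))
      simp only [pow_zero, mul_one] at this
      simp only [cqPowers, Sum.elim_inl, SetLike.mem_coe, Submodule.mem_comap, this, zero_mem]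
  · have := hzero 0 (b + 1) (by
      rw [Nat.cast_zero, zero_sub, dvd_neg]
      exact_mod_cast Nat.not_dvd_of_pos_of_lt b.succ_pos (by omega))
    simp only [pow_zero, one_mul] at this
    simp only [cqPowers, Sum.elim_inr, SetLike.mem_coe, Submodule.mem_comap, this, zero_mem]

theorem sum_pow_K_cqW (h : IsCqAction p q E F K K') :
    (∑ k ∈ range p, K ^ k) (cqW p q) = (p : ℂ) • cqW p q := by
  have hK : K (cqW p q) = (1 : ℂ) • cqW p q := by rw [one_smul, h.K_cqW]
  rw [Module.End.sum_pow_apply_of_apply_eq_smul hK]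
  simp

theorem cqW_mem_of_not_le_cqRadical (h : IsCqAction p q E F K K')
    (hq : IsPrimitiveRoot (q ^ 2) p) (hp : 1 < p) {W : Submodule ℂ (CqAlg p q)}
    (hW : IsUqSubmodule E F K K' W) (hle : W ≤ cqCover p q) (hR : ¬ W ≤ cqRadical p q) :
    cqW p q ∈ W := by
  obtain ⟨x, hxW, hxR⟩ := Set.not_subset.1 hR
  have hx : x ∈ (ℂ ∙ cqW p q) ⊔ cqRadical p q := by
    rw [cqRadical, ← Submodule.span_insert]
    exact hle hxW
  obtain ⟨_, hy, r, hr, rfl⟩ := Submodule.mem_sup.1 hx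
  obtain ⟨c, rfl⟩ := Submodule.mem_span_singleton.1 hy
  have hc : c ≠ 0 := by
    rintro rfl
    exact hxR (by simpa using hr)
  have hcp : c * p ≠ 0 := mul_ne_zero hc (Nat.cast_ne_zero.2 (by omega))
  set T := ∑ k ∈ range p, K ^ k
  have hT : T (c • cqW p q + r) ∈ W := by
    rw [LinearMap.sum_apply]
    refine Submodule.sum_mem _ fun k _ => ?_
    rw [Module.End.pow_apply]
    exact Set.MapsTo.iterate (fun y hy => (hW y hy).2.2.1) k hxW
  obtain ⟨β, hβ⟩ := Submodule.mem_span_singleton.1 (h.sum_pow_K_mem_span_one hq hr)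
  have hTx : T (c • cqW p q + r) = (c * p) • cqW p q + β • 1 := by
    rw [map_add, map_smul, h.sum_pow_K_cqW, hβ, smul_smul]
  rw [hTx] at hT
  have hz : Zg p q ∈ W := by
    have := (hW _ hT).1
    rw [map_add, map_smul, map_smul, h.E_cqW hq hp, h.E_one, smul_zero, add_zero] at this
    exact (W.smul_mem_iff hcp).1 this
  have h1 := h.one_mem_of_Zg_mem hq hp hW hz
  refine (W.smul_mem_iff hcp).1 ?_
  simpa using W.sub_mem hT (W.smul_mem β h1)

theorem eq_bot_or_eq_bot_of_sup_eq_cqCover (h : IsCqAction p q E F K K')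
    (hq : IsPrimitiveRoot (q ^ 2) p) (hp : 1 < p) {W₁ W₂ : Submodule ℂ (CqAlg p q)}
    (h₁ : IsUqSubmodule E F K K' W₁) (h₂ : IsUqSubmodule E F K K' W₂)
    (hsup : W₁ ⊔ W₂ = cqCover p q) (hinf : W₁ ⊓ W₂ = ⊥) : W₁ = ⊥ ∨ W₂ = ⊥ := by
  have key {U V : Submodule ℂ (CqAlg p q)} (hU : IsUqSubmodule E F K K' U)
      (hsup : U ⊔ V = cqCover p q) (hinf : U ⊓ V = ⊥) (hR : ¬ U ≤ cqRadical p q) : V = ⊥ := by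
    have hle : cqCover p q ≤ U :=
      h.cqCover_le hq hp hU (h.cqW_mem_of_not_le_cqRadical hq hp hU (hsup ▸ le_sup_left) hR)
    rw [eq_bot_iff, ← hinf]
    exact le_inf ((hsup ▸ le_sup_right).trans hle) le_rfl
  by_cases hR : W₁ ≤ cqRadical p q
  · refine Or.inl (key h₂ (sup_comm W₁ W₂ ▸ hsup) (inf_comm W₁ W₂ ▸ hinf) fun hR₂ => ?_)
    exact cqW_notMem_cqRadical hq hp
      ((hsup ▸ sup_le hR hR₂ : cqCover p q ≤ cqRadical p q) cqW_mem_cqCover)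
  · exact Or.inr (key h₁ hsup hinf hR)

end IsCqAction

theorem cq_projective_cover_of_trivial_module
    (p : ℕ) (hp : 2 ≤ p)
    (q : ℂ) (hq : q = Complex.exp (Real.pi * Complex.I / p))
    -- the `U_q sl(2)`-module algebra structure of `ℂ_q[z,∂]`
    (actE actF actK actKinv : CqAlg p q →ₗ[ℂ] CqAlg p q)
    (hE : ∀ m : ℕ, actE (Zg p q ^ m) = (-(q ^ m) * qint q m) • Zg p q ^ (m + 1))
    (hF : ∀ m : ℕ, actF (Zg p q ^ m) = (qint q m * q ^ ((1 : ℤ) - m)) • Zg p q ^ (m - 1))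
    (hE' : ∀ n : ℕ, actE (Dg p q ^ n) = (q ^ ((1 : ℤ) - n) * qint q n) • Dg p q ^ (n - 1))
    (hF' : ∀ n : ℕ, actF (Dg p q ^ n) = (-(q ^ n) * qint q n) • Dg p q ^ (n + 1))
    (hK : ∀ m n : ℕ, actK (Zg p q ^ m * Dg p q ^ n)
        = (q ^ (2 * ((m : ℤ) - n))) • (Zg p q ^ m * Dg p q ^ n))
    (hKinv : ∀ m n : ℕ, actKinv (Zg p q ^ m * Dg p q ^ n)
        = (q ^ (-2 * ((m : ℤ) - n))) • (Zg p q ^ m * Dg p q ^ n))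
    (hLeibE : ∀ a b : CqAlg p q, actE (a * b) = a * actE b + actE a * actK b)
    (hLeibF : ∀ a b : CqAlg p q, actF (a * b) = actKinv a * actF b + actF a * b)
    -- the element `w = ∑_{i=1}^{p−1} (1/[i]_q) z^i ∂^i`
    (w : CqAlg p q)
    (hw : w = ∑ i ∈ Finset.Icc 1 (p - 1), (qint q i)⁻¹ • (Zg p q ^ i * Dg p q ^ i)) :
    (∃ c₁ c₂ : ℂ, c₁ ≠ 0 ∧ c₂ ≠ 0 ∧ actE w = c₁ • Zg p q ∧ actF w = c₂ • Dg p q) ∧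
    -- `w` generates a 2p-dimensional indecomposable submodule containing
    -- `1, z, …, z^{p−1}, ∂, …, ∂^{p−1}`
    (∃ W : Submodule ℂ (CqAlg p q),
      (w ∈ W ∧ ∀ x ∈ W, actE x ∈ W ∧ actF x ∈ W ∧ actK x ∈ W ∧ actKinv x ∈ W) ∧
      (∀ W' : Submodule ℂ (CqAlg p q),
        (w ∈ W' ∧ ∀ x ∈ W', actE x ∈ W' ∧ actF x ∈ W' ∧ actK x ∈ W' ∧ actKinv x ∈ W') →
        W ≤ W') ∧
      Module.finrank ℂ W = 2 * p ∧
      (∀ i : ℕ, i < p → Zg p q ^ i ∈ W ∧ Dg p q ^ i ∈ W) ∧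
      -- indecomposability (as a module over the given operators)
      (∀ W1 W2 : Submodule ℂ (CqAlg p q),
        (∀ x ∈ W1, actE x ∈ W1 ∧ actF x ∈ W1 ∧ actK x ∈ W1 ∧ actKinv x ∈ W1) →
        (∀ x ∈ W2, actE x ∈ W2 ∧ actF x ∈ W2 ∧ actK x ∈ W2 ∧ actKinv x ∈ W2) →
        W1 ⊔ W2 = W → W1 ⊓ W2 = ⊥ → W1 = ⊥ ∨ W2 = ⊥)) := by
  obtain rfl : w = cqW p q := hw
  have h : IsCqAction p q actE actF actK actKinv := ⟨hE, hF, hE', hF', hK, hKinv, hLeibE, hLeibF⟩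
  have hζ : IsPrimitiveRoot (q ^ 2) p := by
    rw [hq]
    exact isPrimitiveRoot_sq_exp_pi_mul_I_div (by omega)
  refine ⟨⟨1, 1, one_ne_zero, one_ne_zero, by rw [one_smul, h.E_cqW hζ hp],
      by rw [one_smul, h.F_cqW hζ hp]⟩,
    cqCover p q, ⟨cqW_mem_cqCover, h.isUqSubmodule_cqCover hζ hp⟩,
    fun W' hW' => h.cqCover_le hζ hp hW'.2 hW'.1, finrank_cqCover hζ hp,
    fun i _ => ⟨Zg_pow_mem_cqCover i, Dg_pow_mem_cqCover i⟩,
    fun W₁ W₂ h₁ h₂ => h.eq_bot_or_eq_bot_of_sup_eq_cqCover hζ hp h₁ h₂⟩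
end
end
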